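/- For every n ∈ ℕ and every convex set A ⊂ ℝ with |A| = n, there exists a matching M ⊂ A × A with |M| ≥ ⌊n/2⌋ such that the set A +_M A = {a + b : (a,b) ∈ M} is convex. -/

import Mathlib

/-!
Enumerate `A` increasingly as `a₀ < a₁ < ⋯ < a_{n-1}` and match `a_{2i}` with `a_{2i+1}`.
The gap between consecutive pair sums is `(a_{2i+2} - a_{2i}) + (a_{2i+3} - a_{2i+1})`;
each bracket is the sum of two consecutive gaps of `A`, so it increases with `i` because
the gaps of `A` do.
-/

/-- A finite set `S = {s_1 < ... < s_m} ⊂ ℝ` is convex if its consecutive differences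
are strictly increasing. -/
def ConvexFinset (S : Finset ℝ) : Prop :=
  ∀ i : ℕ, ∀ h : i + 2 < S.card,
    (S.orderIsoOfFin rfl ⟨i + 2, h⟩ : ℝ) - (S.orderIsoOfFin rfl ⟨i + 1, by omega⟩ : ℝ) >
    (S.orderIsoOfFin rfl ⟨i + 1, by omega⟩ : ℝ) - (S.orderIsoOfFin rfl ⟨i, by omega⟩ : ℝ)

/-- `M ⊆ A × A` is a matching if each element of `A` occurs in at most one coordinate of
at most one pair of `M`. -/
def IsMatching (A : Finset ℝ) (M : Finset (ℝ × ℝ)) : Prop :=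
  (∀ p ∈ M, p.1 ∈ A ∧ p.2 ∈ A ∧ p.1 ≠ p.2) ∧
  (∀ p ∈ M, ∀ q ∈ M, p ≠ q → p.1 ≠ q.1 ∧ p.1 ≠ q.2 ∧ p.2 ≠ q.1 ∧ p.2 ≠ q.2)

open Finset

def HasIncreasingGaps (m : ℕ) (a : ℕ → ℝ) : Prop :=
  ∀ i, i + 2 < m → a (i + 1) - a i < a (i + 2) - a (i + 1)

section Enumeration

variable {m : ℕ} {a : ℕ → ℝ}

lemma card_image_range_of_strictMonoOn (ha : StrictMonoOn a (Set.Iio m)) :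
    ((range m).image a).card = m := by
  rw [card_image_of_injOn (fun i hi j hj => ha.injOn (by simpa using hi) (by simpa using hj)),
    card_range]

lemma orderIsoOfFin_image_range (ha : StrictMonoOn a (Set.Iio m)) (i : ℕ)
    (hi : i < ((range m).image a).card) :
    (((range m).image a).orderIsoOfFin rfl ⟨i, hi⟩ : ℝ) = a i := by
  have hcard := card_image_range_of_strictMonoOn ha
  have hlt (j : Fin ((range m).image a).card) : (j : ℕ) < m := by have := j.isLt; omega
  have henum : (fun j : Fin ((range m).image a).card => a j) =
      ((range m).image a).orderEmbOfFin rfl :=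
    orderEmbOfFin_unique _ (fun j => mem_image_of_mem a (mem_range.2 (hlt j)))
      (fun j k hjk => ha (hlt j) (hlt k) hjk)
  rw [coe_orderIsoOfFin_apply, ← henum]

lemma convexFinset_image_range_iff (ha : StrictMonoOn a (Set.Iio m)) :
    ConvexFinset ((range m).image a) ↔ HasIncreasingGaps m a := by
  simp only [ConvexFinset, orderIsoOfFin_image_range ha, card_image_range_of_strictMonoOn ha,
    HasIncreasingGaps, gt_iff_lt]

lemma exists_strictMonoOn_image_range_eq (A : Finset ℝ) {n : ℕ} (hn : A.card = n) :
    ∃ a : ℕ → ℝ, StrictMonoOn a (Set.Iio n) ∧ (range n).image a = A := by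
  subst hn
  let e := A.orderEmbOfFin rfl
  refine ⟨fun i => if h : i < A.card then e ⟨i, h⟩ else 0, ?_, ?_⟩
  · intro i hi j hj hij
    simp only [Set.mem_Iio] at hi hj
    simpa only [dif_pos hi, dif_pos hj] using
      e.strictMono (show (⟨i, hi⟩ : Fin _) < ⟨j, hj⟩ from hij)
  · ext x
    simp only [mem_image, mem_range]
    constructor
    · rintro ⟨i, hi, rfl⟩
      simpa only [dif_pos hi] using A.orderEmbOfFin_mem rfl ⟨i, hi⟩
    · intro hx
      obtain ⟨j, rfl⟩ : x ∈ Set.range e := by rwa [range_orderEmbOfFin]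
      exact ⟨j, j.isLt, by simp⟩

end Enumeration

section ConsecutivePairs

noncomputable def consecutivePairs (n : ℕ) (a : ℕ → ℝ) : Finset (ℝ × ℝ) :=
  (range (n / 2)).image fun i => (a (2 * i), a (2 * i + 1))

variable {n : ℕ} {a : ℕ → ℝ}

lemma isMatching_consecutivePairs (ha : StrictMonoOn a (Set.Iio n)) :
    IsMatching ((range n).image a) (consecutivePairs n a) := by
  have hne : ∀ i j, i < n → j < n → i ≠ j → a i ≠ a j := fun i j hi hj hij h =>
    hij (ha.injOn hi hj h)
  have hmem : ∀ i, i < n → a i ∈ (range n).image a := fun i hi =>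
    mem_image_of_mem a (mem_range.2 hi)
  simp only [IsMatching, consecutivePairs, forall_mem_image, mem_range]
  refine ⟨fun i hi => ⟨hmem _ (by omega), hmem _ (by omega),
    hne _ _ (by omega) (by omega) (by omega)⟩, fun i hi j hj hij => ?_⟩
  have hij : i ≠ j := by rintro rfl; exact hij rfl
  exact ⟨hne _ _ (by omega) (by omega) (by omega), hne _ _ (by omega) (by omega) (by omega),
    hne _ _ (by omega) (by omega) (by omega), hne _ _ (by omega) (by omega) (by omega)⟩

lemma card_consecutivePairs (ha : StrictMonoOn a (Set.Iio n)) :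
    (consecutivePairs n a).card = n / 2 := by
  rw [consecutivePairs, card_image_of_injOn, card_range]
  intro i hi j hj hij
  simp only [coe_range, Set.mem_Iio] at hi hj
  have := ha.injOn (x₁ := 2 * i) (x₂ := 2 * j) (Set.mem_Iio.2 (by omega))
    (Set.mem_Iio.2 (by omega)) (congrArg Prod.fst hij)
  omega

lemma image_add_consecutivePairs :
    (consecutivePairs n a).image (fun p => p.1 + p.2) =
      (range (n / 2)).image fun i => a (2 * i) + a (2 * i + 1) := by
  rw [consecutivePairs, image_image]
  rfl

lemma strictMonoOn_pairSums (ha : StrictMonoOn a (Set.Iio n)) :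
    StrictMonoOn (fun i => a (2 * i) + a (2 * i + 1)) (Set.Iio (n / 2)) := by
  intro i hi j hj hij
  simp only [Set.mem_Iio] at hi hj
  have h₀ : a (2 * i) < a (2 * j) :=
    ha (show 2 * i < n by omega) (show 2 * j < n by omega) (by omega)
  have h₁ : a (2 * i + 1) < a (2 * j + 1) :=
    ha (show 2 * i + 1 < n by omega) (show 2 * j + 1 < n by omega) (by omega)
  exact add_lt_add h₀ h₁

lemma HasIncreasingGaps.pairSums (ha : HasIncreasingGaps n a) :
    HasIncreasingGaps (n / 2) fun i => a (2 * i) + a (2 * i + 1) := by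
  intro i hi
  have h₀ : a (2 * i + 1) - a (2 * i) < a (2 * i + 2) - a (2 * i + 1) := ha (2 * i) (by omega)
  have h₁ : a (2 * i + 2) - a (2 * i + 1) < a (2 * i + 3) - a (2 * i + 2) :=
    ha (2 * i + 1) (by omega)
  have h₂ : a (2 * i + 3) - a (2 * i + 2) < a (2 * i + 4) - a (2 * i + 3) :=
    ha (2 * i + 2) (by omega)
  have h₃ : a (2 * i + 4) - a (2 * i + 3) < a (2 * i + 5) - a (2 * i + 4) :=
    ha (2 * i + 3) (by omega)
  simp only [mul_add, mul_one]
  linarith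

end ConsecutivePairs

/-- for every `n` and every convex `A ⊂ ℝ` with `|A| = n`, there is a
matching `M ⊆ A × A` with `|M| ≥ ⌊n/2⌋` such that `A +_M A = {a + b : (a,b) ∈ M}` is
convex. -/
theorem statement16 (n : ℕ) (A : Finset ℝ) (hcard : A.card = n) (hconv : ConvexFinset A) :
    ∃ M : Finset (ℝ × ℝ), IsMatching A M ∧ n / 2 ≤ M.card ∧
      ConvexFinset (M.image (fun p => p.1 + p.2)) := by
  obtain ⟨a, ha, rfl⟩ := exists_strictMonoOn_image_range_eq A hcard
  rw [convexFinset_image_range_iff ha] at hconv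
  refine ⟨consecutivePairs n a, isMatching_consecutivePairs ha,
    (card_consecutivePairs ha).ge, ?_⟩
  rw [image_add_consecutivePairs, convexFinset_image_range_iff (strictMonoOn_pairSums ha)]
  exact hconv.pairSums
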